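/- Let H be a finitely generated group, and let G be a group with a surjective group homomorphism φ : G → H whose kernel is contained in the center of G (i.e., G is a central extension of H). Fix an integer n ≥ 1 and suppose that the lower central series term γₙ(G) is finitely generated. Then γ_{n+1}(G) is finitely generated if and only if γ_{n+1}(H) is finitely generated. -/

import Mathlib

/-!
Write `K = ker φ`, `A = γₙ(G) = ⟨T⟩` and `L = γₙ₊₁(G) = [A, G]`, and lift finite generating sets
to get a finite `S` with `G = ⟨S⟩K` and a finite `Y ⊆ L` with `L ⊆ ⟨Y⟩K` (the latter because
`φ(L) = γₙ₊₁(H)` is finitely generated). Since `K` is central, conjugation by `s ∈ S^{±1}` moves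
`p = yk ∈ L` (`y ∈ ⟨Y⟩`, `k ∈ K`) to `(s y s⁻¹) k = (s y s⁻¹) · y⁻¹ p`. Hence the subgroup `P`
generated by `Y`, the conjugates `s Y s⁻¹` and the commutators `[T, S]` is normal in `G`, and as it
contains `[T, S]` it contains `[A, G] = L`; so `L = P` is finitely generated.
-/

open scoped commutatorElement

namespace Subgroup

variable {G G' : Type*} [Group G] [Group G']

theorem FG.map {P : Subgroup G} (hP : P.FG) (f : G →* G') : (P.map f).FG := by
  classical
  obtain ⟨S, rfl⟩ := hP
  exact ⟨S.image f, by rw [Finset.coe_image, MonoidHom.map_closure]⟩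

theorem exists_finite_subset_le_closure_sup_ker (f : G →* G') {L : Subgroup G}
    (h : (L.map f).FG) : ∃ Y : Set G, Y.Finite ∧ Y ⊆ L ∧ L ≤ closure Y ⊔ f.ker := by
  obtain ⟨Y', hY'L, hY'⟩ := (fg_iff _).1 h
  have hY'sub : Y' ⊆ f '' L := by
    rw [← coe_map, ← hY'L]
    exact subset_closure
  obtain ⟨Y, hYL, hY, rfl⟩ := Set.exists_subset_image_finite_and.1 ⟨Y', hY'sub, hY', rfl⟩
  refine ⟨Y, hY, hYL, ?_⟩
  rw [← comap_map_eq, MonoidHom.map_closure, hY'L]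
  exact le_comap_map f L

theorem commutator_closure_le {P : Subgroup G} [P.Normal] {T X : Set G}
    (h : ∀ t ∈ T, ∀ x ∈ X, ⁅t, x⁆ ∈ P) : ⁅closure T, closure X⁆ ≤ P := by
  rw [← QuotientGroup.ker_mk' P, ← map_eq_bot_iff, map_commutator, MonoidHom.map_closure,
    MonoidHom.map_closure, commutator_eq_bot_iff_le_centralizer, centralizer_closure, closure_le]
  rintro _ ⟨t, ht, rfl⟩ _ ⟨x, hx, rfl⟩
  rw [← commutatorElement_eq_one_iff_mul_comm, ← map_commutatorElement, ← MonoidHom.mem_ker,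
    QuotientGroup.ker_mk', ← commutatorElement_inv]
  exact inv_mem (h t ht x hx)

theorem normal_of_conj_mem_of_closure_sup_center_eq_top {S : Set G}
    (hS : closure S ⊔ center G = ⊤) {P : Subgroup G}
    (h : ∀ s ∈ S ∪ S⁻¹, ∀ p ∈ P, s * p * s⁻¹ ∈ P) : P.Normal := by
  have hSP : S ⊆ normalizer (P : Set G) := fun s hs p =>
    ⟨h s (.inl hs) p, fun hp => by
      simpa [mul_assoc] using h s⁻¹ (.inr (Set.inv_mem_inv.2 hs)) _ hp⟩
  rw [← normalizer_eq_top_iff, ← top_le_iff, ← hS]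
  exact sup_le (closure_le _ |>.2 hSP) (center_le_normalizer _)

theorem conj_mem_of_le_closure_sup_center {P : Subgroup G} {Y : Set G}
    (hP : P ≤ closure Y ⊔ center G) (hYP : Y ⊆ P) {x : G} (hx : ∀ y ∈ Y, x * y * x⁻¹ ∈ P)
    {p : G} (hp : p ∈ P) : x * p * x⁻¹ ∈ P := by
  obtain ⟨m, hm, z, hz, rfl⟩ := mem_sup_of_normal_right.1 (hP hp)
  have hmP : x * m * x⁻¹ ∈ P := (closure_le (P.comap (MulAut.conj x).toMonoidHom)).2 hx hm
  have hzP : z ∈ P := by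
    simpa using P.mul_mem (P.inv_mem ((closure_le P).2 hYP hm)) hp
  have hcomm : x * (m * z) * x⁻¹ = x * m * x⁻¹ * z := by
    simp only [mul_assoc, ← mem_center_iff.1 hz x⁻¹]
  rw [hcomm]
  exact P.mul_mem hmP hzP

theorem fg_commutator_top_of_le_closure_sup_center {A : Subgroup G} [A.Normal] (hA : A.FG)
    {S Y : Set G} (hS : S.Finite) (hSG : closure S ⊔ center G = ⊤) (hY : Y.Finite)
    (hYA : Y ⊆ (⁅A, ⊤⁆ : Subgroup G)) (hAY : ⁅A, (⊤ : Subgroup G)⁆ ≤ closure Y ⊔ center G) :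
    ⁅A, (⊤ : Subgroup G)⁆.FG := by
  obtain ⟨T, rfl, hT⟩ := (fg_iff A).1 hA
  set F := Set.image2 (⁅·, ·⁆) T S ∪ Y ∪ Set.image2 (fun x y => x * y * x⁻¹) (S ∪ S⁻¹) Y
  have hFL : closure F ≤ ⁅closure T, ⊤⁆ := by
    rw [closure_le]
    rintro _ ((⟨t, ht, s, -, rfl⟩ | hy) | ⟨x, -, y, hy, rfl⟩)
    · exact commutator_mem_commutator (subset_closure ht) (mem_top s)
    · exact hYA hy
    · exact Normal.conj_mem inferInstance y (hYA hy) x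
  have : (closure F).Normal :=
    normal_of_conj_mem_of_closure_sup_center_eq_top hSG fun x hx p hp =>
      conj_mem_of_le_closure_sup_center (hFL.trans hAY)
        (fun y hy => subset_closure (.inl (.inr hy)))
        (fun y hy => subset_closure (.inr ⟨x, hx, y, hy, rfl⟩)) hp
  refine (fg_iff _).2 ⟨F, le_antisymm hFL ?_, ((hT.image2 _ hS).union hY).union
    ((hS.union hS.inv).image2 _ hY)⟩
  rw [← hSG, ← closure_eq (center G), ← closure_union]
  refine commutator_closure_le fun t ht x hx => ?_
  rcases hx with hs | hz
  · exact subset_closure (.inl (.inl ⟨t, ht, x, hs, rfl⟩))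
  · rw [commutatorElement_eq_one_iff_mul_comm.2 (mem_center_iff.1 hz t)]
    exact one_mem _

end Subgroup

open Subgroup in
/-- Let `H` be a finitely generated group and `G` a central extension of `H`. Fix `n ≥ 1` and
suppose that the lower central series term `γₙ(G)` is finitely generated. Then `γ_{n+1}(G)` is
finitely generated if and only if `γ_{n+1}(H)` is finitely generated.
(Here `γₙ = lowerCentralSeries · (n - 1)`, since Mathlib's lower central series starts at
index `0`; thus `γ_{n+1} = lowerCentralSeries · n`.) -/
theorem lowerCentralSeries_succ_fg_iff_of_central_extension
    {G H : Type*} [Group G] [Group H] (φ : G →* H)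
    (hsurj : Function.Surjective φ) (hker : φ.ker ≤ Subgroup.center G)
    (hH : Group.FG H) (n : ℕ) (hn : 1 ≤ n)
    (hfg : ((⊤ : Subgroup G).lowerCentralSeries (n - 1)).FG) :
    ((⊤ : Subgroup G).lowerCentralSeries n).FG ↔ ((⊤ : Subgroup H).lowerCentralSeries n).FG := by
  obtain ⟨m, rfl⟩ : ∃ m, n = m + 1 := ⟨n - 1, by omega⟩
  rw [Nat.add_sub_cancel] at hfg
  have hmap (k : ℕ) : ((⊤ : Subgroup G).lowerCentralSeries k).map φ =
      (⊤ : Subgroup H).lowerCentralSeries k := by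
    rw [map_lowerCentralSeries, map_top_of_surjective φ hsurj]
  refine ⟨fun h => hmap (m + 1) ▸ h.map φ, fun h => ?_⟩
  obtain ⟨S, hS, -, hSG⟩ := exists_finite_subset_le_closure_sup_ker φ (L := ⊤)
    (by rwa [map_top_of_surjective φ hsurj, ← Group.fg_def])
  obtain ⟨Y, hY, hYL, hLY⟩ := exists_finite_subset_le_closure_sup_ker φ (hmap (m + 1) ▸ h)
  exact fg_commutator_top_of_le_closure_sup_center hfg hS
    (top_le_iff.1 (hSG.trans (sup_le_sup_left hker _))) hY hYL (hLY.trans (sup_le_sup_left hker _))
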